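/- arXiv:1910.03511 — 2 statements merged into one kernel-verified Lean document; each statement's English description precedes it below -/
import Mathlib

section
/- For any face F of 𝒜 with facial interval [m_F, M_F], one has S(m_F) = {H ∈ 𝒜 : F(H) = −} and S(M_F) = {H ∈ 𝒜 : F(H) ≤ 0}. Equivalently, for each H ∈ 𝒜: F(H) = − iff H ∈ S(m_F); F(H) = 0 iff H ∈ S(M_F) and H ∉ S(m_F); and F(H) = + iff H ∉ S(M_F). -/
open scoped RealInnerProductSpace Pointwise

variable {V : Type*} [NormedAddCommGroup V] [InnerProductSpace ℝ V] [FiniteDimensional ℝ V]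
  {ι : Type*} [Fintype ι]

/-- The (open) complement of the union of the hyperplanes with chosen normals `e i`. -/
def arrComplement (e : ι → V) : Set V := {v | ∀ i, ⟪e i, v⟫ ≠ 0}

/-- A region of the arrangement: the closure of a connected component of the complement
of the union of the hyperplanes. -/
def IsRegion (e : ι → V) (R : Set V) : Prop :=
  ∃ x ∈ arrComplement e, R = closure (connectedComponentIn (arrComplement e) x)

/-- The positive closed half-space bounded by the hyperplane with normal `e i`. -/
def posHalf (e : ι → V) (i : ι) : Set V := {v | 0 ≤ ⟪e i, v⟫}

/-- The negative closed half-space bounded by the hyperplane with normal `e i`. -/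
def negHalf (e : ι → V) (i : ι) : Set V := {v | ⟪e i, v⟫ ≤ 0}

/-- The separation set of two regions: the (indices of) hyperplanes such that the two
regions lie in opposite closed half-spaces. -/
def sepSet (e : ι → V) (R R' : Set V) : Set ι :=
  {i | (R ⊆ posHalf e i ∧ R' ⊆ negHalf e i) ∨ (R ⊆ negHalf e i ∧ R' ⊆ posHalf e i)}

/-- The order of the poset of regions `PR(𝒜,B)`. -/
def PRle (e : ι → V) (B R R' : Set V) : Prop := sepSet e B R ⊆ sepSet e B R'

/-- Strict order of the poset of regions. -/
def PRlt (e : ι → V) (B R R' : Set V) : Prop := PRle e B R R' ∧ R ≠ R'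

/-- Cover relation in the poset of regions. -/
def PRcover (e : ι → V) (B R R' : Set V) : Prop :=
  PRlt e B R R' ∧ ¬ ∃ U, IsRegion e U ∧ PRlt e B R U ∧ PRlt e B U R'

/-- A face of the arrangement: an intersection of a nonempty collection of regions. -/
def IsFace (e : ι → V) (F : Set V) : Prop :=
  ∃ Rs : Set (Set V), Rs.Nonempty ∧ (∀ R ∈ Rs, IsRegion e R) ∧ F = ⋂₀ Rs

/-- `[m, M]` is the facial interval of the face `F` in the poset of regions:
the regions containing `F` are exactly those between `m` and `M`. -/
def IsFacialInterval (e : ι → V) (B F m M : Set V) : Prop :=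
  IsRegion e m ∧ IsRegion e M ∧
    ∀ R, IsRegion e R → (F ⊆ R ↔ (PRle e B m R ∧ PRle e B R M))

/-- The facial weak order `FW(𝒜,B)`: `F ≤ G` iff `m_F ≤ m_G` and `M_F ≤ M_G`
in the poset of regions. -/
def FWle (e : ι → V) (B F G : Set V) : Prop :=
  ∃ mF MF mG MG, IsFacialInterval e B F mF MF ∧ IsFacialInterval e B G mG MG ∧
    PRle e B mF mG ∧ PRle e B MF MG

/-- Strict facial weak order. -/
def FWlt (e : ι → V) (B F G : Set V) : Prop := FWle e B F G ∧ F ≠ G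

/-- Cover relation in the facial weak order. -/
def FWcover (e : ι → V) (B F G : Set V) : Prop :=
  FWlt e B F G ∧ ¬ ∃ X, IsFace e X ∧ FWlt e B F X ∧ FWlt e B X G

/-- Two faces have the same maximal region `M` of their facial intervals. -/
def SameMax (e : ι → V) (B F G : Set V) : Prop :=
  ∃ m m' M, IsFacialInterval e B F m M ∧ IsFacialInterval e B G m' M

/-- Two faces have the same minimal region `m` of their facial intervals. -/
def SameMin (e : ι → V) (B F G : Set V) : Prop :=
  ∃ m M M', IsFacialInterval e B F m M ∧ IsFacialInterval e B G m M'

/-- The dimension of a face: the dimension of its linear span. -/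
noncomputable def fdim (F : Set V) : ℕ := Module.finrank ℝ (Submodule.span ℝ F)

open Classical in
/-- The covector (sign vector) of a face: the sign of `⟪e i, x⟫` for `x` in the
relative interior of the face. -/
noncomputable def covec (e : ι → V) (F : Set V) (i : ι) : SignType :=
  if ∀ x ∈ intrinsicInterior ℝ F, 0 < ⟪e i, x⟫ then 1
  else if ∀ x ∈ intrinsicInterior ℝ F, ⟪e i, x⟫ < 0 then -1
  else 0

/-- Composition of sign vectors. -/
def scomp (f g : ι → SignType) (i : ι) : SignType := if f i ≠ 0 then f i else g i

/-- The set of roots of the arrangement: the chosen normals and their opposites. -/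
def roots (e : ι → V) : Set V := Set.range e ∪ Set.range (fun i => -(e i))

/-- The root inversion set of a face. -/
def rootInv (e : ι → V) (F : Set V) : Set V :=
  {v ∈ roots e | ∃ x ∈ intrinsicInterior ℝ F, ⟪x, v⟫ ≤ 0}

/-- `H i` is a wall of the region `R`. -/
noncomputable def IsWall (e : ι → V) (R : Set V) (i : ι) : Prop :=
  fdim ({v : V | ⟪e i, v⟫ = 0} ∩ R) = Module.finrank ℝ V - 1

/-- A region is simplicial when the normal vectors of its walls are linearly independent. -/
def IsSimplicialRegion (e : ι → V) (R : Set V) : Prop :=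
  LinearIndependent ℝ (fun i : {i : ι // IsWall e R i} => e i.1)

/-- The arrangement is simplicial when all its regions are. -/
def IsSimplicial (e : ι → V) : Prop := ∀ R, IsRegion e R → IsSimplicialRegion e R

/-- The arrangement is essential when the intersection of all its hyperplanes is `{0}`. -/
def IsEssential (e : ι → V) : Prop := (⋂ i, {v : V | ⟪e i, v⟫ = 0}) = ({0} : Set V)

/-- The poset of regions is a lattice: any two regions have a join and a meet. -/
def PRIsLattice (e : ι → V) (B : Set V) : Prop :=
  ∀ R R', IsRegion e R → IsRegion e R' →
    (∃ J, IsRegion e J ∧ PRle e B R J ∧ PRle e B R' J ∧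
      ∀ U, IsRegion e U → PRle e B R U → PRle e B R' U → PRle e B J U) ∧
    (∃ M, IsRegion e M ∧ PRle e B M R ∧ PRle e B M R' ∧
      ∀ U, IsRegion e U → PRle e B U R → PRle e B U R' → PRle e B U M)

/-!
A region is the closed cone `closedChamber e x` of the points at which every `⟪e i, ·⟫` has
the weak sign it has at some generic `x`. Hence each `⟪e i, ·⟫` has a weak sign on a face `F`,
vanishing identically on `F` as soon as it vanishes at a relative interior point `z`, so `F(H)` is
the sign of `⟪e H, z⟫`. For a point `b` of `B` off all hyperplanes and small `ε > 0`, the chamber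
of `z + ε b` contains `F` and its sign vector is that of `F` with `0` turned into `+`; as this
chamber lies above `m_F`, `S(m_F) ⊆ {F(H) = −}`, and conversely `m_F ∋ z`. Symmetrically the
chamber of `z - ε b` lies below `M_F` and turns `0` into `−`, which gives `S(M_F)`.
-/

open Filter Topology

section Chambers

omit [FiniteDimensional ℝ V] [Fintype ι]

variable {e : ι → V}

/-- The points at which every `⟪e i, ·⟫` has the same weak sign as at `x`. -/
def closedChamber (e : ι → V) (x : V) : Set V := {v | ∀ i, 0 ≤ ⟪e i, x⟫ * ⟪e i, v⟫}

theorem convex_closedChamber (x : V) : Convex ℝ (closedChamber e x) := by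
  have : closedChamber e x = ⋂ i, {v | 0 ≤ ⟪⟪e i, x⟫ • e i, v⟫} := by
    ext v; simp [closedChamber, real_inner_smul_left]
  rw [this]
  exact convex_iInter fun i => convex_halfSpace_ge (innerₛₗ ℝ _).isLinear 0

theorem isClosed_closedChamber (x : V) : IsClosed (closedChamber e x) := by
  simp only [closedChamber, Set.ofPred_forall]
  exact isClosed_iInter fun i =>
    isClosed_le continuous_const (continuous_const.mul (continuous_const.inner continuous_id))

theorem zero_mem_closedChamber (x : V) : (0 : V) ∈ closedChamber e x := by
  simp [closedChamber]

theorem self_mem_closedChamber (x : V) : x ∈ closedChamber e x :=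
  fun _ => mul_self_nonneg _

theorem connectedComponentIn_arrComplement {x : V} (hx : x ∈ arrComplement e) :
    connectedComponentIn (arrComplement e) x = {v | ∀ i, 0 < ⟪e i, x⟫ * ⟪e i, v⟫} := by
  refine subset_antisymm (fun v hv i => ?_) ?_
  · by_contra! hneg
    -- The intermediate value theorem on the component produces a point of a hyperplane.
    obtain ⟨w, hw, hw0⟩ := isPreconnected_connectedComponentIn.intermediate_value hv
      (mem_connectedComponentIn hx)
      (continuous_const.mul (continuous_const.inner continuous_id)).continuousOn
      (⟨hneg, mul_self_nonneg _⟩ : (0 : ℝ) ∈ Set.Icc (⟪e i, x⟫ * ⟪e i, v⟫) (⟪e i, x⟫ * ⟪e i, x⟫))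
    exact (mul_ne_zero (hx i) (connectedComponentIn_subset _ _ hw i)) hw0
  · have hconv : Convex ℝ {v : V | ∀ i, 0 < ⟪e i, x⟫ * ⟪e i, v⟫} := by
      have : {v : V | ∀ i, 0 < ⟪e i, x⟫ * ⟪e i, v⟫} = ⋂ i, {v | 0 < ⟪⟪e i, x⟫ • e i, v⟫} := by
        ext v; simp [real_inner_smul_left]
      rw [this]
      exact convex_iInter fun i => convex_halfSpace_gt (innerₛₗ ℝ _).isLinear 0
    exact hconv.isPreconnected.subset_connectedComponentIn
      (fun i => mul_self_pos.2 (hx i)) fun v hv i h => (hv i).ne' (by rw [h, mul_zero])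

theorem closure_connectedComponentIn_arrComplement {x : V} (hx : x ∈ arrComplement e) :
    closure (connectedComponentIn (arrComplement e) x) = closedChamber e x := by
  rw [connectedComponentIn_arrComplement hx]
  refine subset_antisymm
    (closure_minimal (fun v hv i => (hv i).le) (isClosed_closedChamber x)) fun v hv => ?_
  have hseg : openSegment ℝ x v ⊆ {v | ∀ i, 0 < ⟪e i, x⟫ * ⟪e i, v⟫} := by
    rintro _ ⟨a, b, ha, hb, -, rfl⟩ i
    have := hv i
    have := mul_self_pos.2 (hx i)
    simp only [inner_add_right, real_inner_smul_right]
    nlinarith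
  exact closure_mono hseg (segment_subset_closure_openSegment (right_mem_segment ℝ x v))

theorem isRegion_closedChamber {x : V} (hx : x ∈ arrComplement e) :
    IsRegion e (closedChamber e x) :=
  ⟨x, hx, (closure_connectedComponentIn_arrComplement hx).symm⟩

theorem IsRegion.exists_eq_closedChamber {R : Set V} (hR : IsRegion e R) :
    ∃ x ∈ arrComplement e, R = closedChamber e x := by
  obtain ⟨x, hx, rfl⟩ := hR
  exact ⟨x, hx, closure_connectedComponentIn_arrComplement hx⟩

theorem IsRegion.subset_negHalf_of_mem {R : Set V} (hR : IsRegion e R) {v : V} (hv : v ∈ R)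
    {i : ι} (hneg : ⟪e i, v⟫ < 0) : R ⊆ negHalf e i := by
  obtain ⟨x, hx, rfl⟩ := hR.exists_eq_closedChamber
  have hxi : ⟪e i, x⟫ < 0 := by
    by_contra! h
    exact (mul_neg_of_pos_of_neg (lt_of_le_of_ne h (hx i).symm) hneg).not_ge (hv i)
  exact fun w hw => nonpos_of_mul_nonneg_right (hw i) hxi

theorem IsRegion.exists_mem_forall_inner_pos {B : Set V} (hB : IsRegion e B)
    (hBpos : ∀ i, B ⊆ posHalf e i) : ∃ b ∈ B, ∀ i, 0 < ⟪e i, b⟫ := by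
  obtain ⟨b, hb, rfl⟩ := hB
  have hbB := subset_closure (mem_connectedComponentIn hb)
  exact ⟨b, hbB, fun i => lt_of_le_of_ne (hBpos i hbB) (hb i).symm⟩

theorem mem_sepSet_iff_subset_negHalf {B R : Set V} {b : V} (hbB : b ∈ B)
    (hb : ∀ i, 0 < ⟪e i, b⟫) (hBpos : ∀ i, B ⊆ posHalf e i) (i : ι) :
    i ∈ sepSet e B R ↔ R ⊆ negHalf e i := by
  refine ⟨?_, fun h => Or.inl ⟨hBpos i, h⟩⟩
  rintro (⟨-, h⟩ | ⟨hBneg, -⟩)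
  · exact h
  · exact absurd (hBneg hbB) (hb i).not_ge

end Chambers

section RelativeInterior

variable {E : Type*} [NormedAddCommGroup E] [NormedSpace ℝ E]

theorem exists_pos_add_smul_sub_mem_of_mem_intrinsicInterior {F : Set E} {z v : E}
    (hz : z ∈ intrinsicInterior ℝ F) (hv : v ∈ F) : ∃ t : ℝ, 0 < t ∧ z + t • (z - v) ∈ F := by
  obtain ⟨z', hz', rfl⟩ := hz
  have : Nonempty (affineSpan ℝ F) := ⟨z'⟩
  let v' : affineSpan ℝ F := ⟨v, subset_affineSpan ℝ F hv⟩
  have hcont : Continuous fun t : ℝ => AffineMap.lineMap z' v' (-t) := by fun_prop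
  have hnear : ∀ᶠ t in 𝓝 (0 : ℝ), AffineMap.lineMap z' v' (-t) ∈ interior ((↑) ⁻¹' F) :=
    hcont.continuousAt.preimage_mem_nhds (by simpa using isOpen_interior.mem_nhds hz')
  obtain ⟨t, ht, htpos⟩ :=
    ((hnear.filter_mono nhdsWithin_le_nhds).and (self_mem_nhdsWithin (s := Set.Ioi 0))).exists
  refine ⟨t, htpos, ?_⟩
  have := Set.mem_preimage.1 (interior_subset ht)
  convert this using 1
  simp only [AffineMap.lineMap_apply, AffineSubspace.coe_vadd, SetLike.val_smul,
    AffineSubspace.coe_vsub, vsub_eq_sub, vadd_eq_add, v']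
  module

theorem eq_zero_of_nonneg_of_mem_intrinsicInterior {F : Set E} (f : E →ₗ[ℝ] ℝ)
    (hF : ∀ v ∈ F, 0 ≤ f v) {z v : E} (hz : z ∈ intrinsicInterior ℝ F) (hz0 : f z = 0)
    (hv : v ∈ F) : f v = 0 := by
  obtain ⟨t, ht, htF⟩ := exists_pos_add_smul_sub_mem_of_mem_intrinsicInterior hz hv
  have := hF _ htF
  simp only [map_add, map_smul, map_sub, hz0, smul_eq_mul] at this
  nlinarith [hF v hv]

end RelativeInterior

section Faces

omit [FiniteDimensional ℝ V] [Fintype ι]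

variable {e : ι → V} {F : Set V} {z : V}

theorem IsFace.convex (hF : IsFace e F) : Convex ℝ F := by
  obtain ⟨Rs, -, hRs, rfl⟩ := hF
  refine convex_sInter fun R hR => ?_
  obtain ⟨x, -, rfl⟩ := (hRs R hR).exists_eq_closedChamber
  exact convex_closedChamber x

theorem IsFace.zero_mem (hF : IsFace e F) : (0 : V) ∈ F := by
  obtain ⟨Rs, -, hRs, rfl⟩ := hF
  refine Set.mem_sInter.2 fun R hR => ?_
  obtain ⟨x, -, rfl⟩ := (hRs R hR).exists_eq_closedChamber
  exact zero_mem_closedChamber x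

theorem IsFace.exists_isRegion_superset (hF : IsFace e F) : ∃ R, IsRegion e R ∧ F ⊆ R := by
  obtain ⟨Rs, ⟨R, hR⟩, hRs, rfl⟩ := hF
  exact ⟨R, hRs R hR, Set.sInter_subset_of_mem hR⟩

theorem IsFace.nonempty_intrinsicInterior [FiniteDimensional ℝ V] (hF : IsFace e F) :
    (intrinsicInterior ℝ F).Nonempty :=
  Set.Nonempty.intrinsicInterior hF.convex ⟨0, hF.zero_mem⟩

theorem IsFace.inner_mul_inner_nonneg (hF : IsFace e F) {x v : V} (hx : x ∈ F) (hv : v ∈ F)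
    (i : ι) : 0 ≤ ⟪e i, x⟫ * ⟪e i, v⟫ := by
  obtain ⟨R, hR, hFR⟩ := hF.exists_isRegion_superset
  obtain ⟨y, hy, rfl⟩ := hR.exists_eq_closedChamber
  nlinarith [mul_nonneg (hFR hx i) (hFR hv i), mul_self_pos.2 (hy i)]

theorem IsFace.inner_eq_zero_of_inner_eq_zero (hF : IsFace e F) (hz : z ∈ intrinsicInterior ℝ F)
    {v : V} (hv : v ∈ F) {i : ι} (hz0 : ⟪e i, z⟫ = 0) : ⟪e i, v⟫ = 0 := by
  obtain ⟨R, hR, hFR⟩ := hF.exists_isRegion_superset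
  obtain ⟨y, hy, rfl⟩ := hR.exists_eq_closedChamber
  have := eq_zero_of_nonneg_of_mem_intrinsicInterior (innerₛₗ ℝ (⟪e i, y⟫ • e i))
    (fun w hw => by simpa [real_inner_smul_left] using hFR hw i) hz (by simp [hz0]) hv
  simpa [real_inner_smul_left, hy i] using this

theorem IsFace.sign_inner_eq (hF : IsFace e F) {x : V} (hx : x ∈ intrinsicInterior ℝ F)
    (hz : z ∈ intrinsicInterior ℝ F) (i : ι) :
    SignType.sign ⟪e i, x⟫ = SignType.sign ⟪e i, z⟫ := by
  have hzx := hF.inner_mul_inner_nonneg (intrinsicInterior_subset hz) (intrinsicInterior_subset hx) i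
  have hzx0 := hF.inner_eq_zero_of_inner_eq_zero hz (intrinsicInterior_subset hx) (i := i)
  have hxz0 := hF.inner_eq_zero_of_inner_eq_zero hx (intrinsicInterior_subset hz) (i := i)
  rcases lt_trichotomy ⟪e i, z⟫ 0 with h | h | h
  · rw [sign_neg h, sign_neg ((nonpos_of_mul_nonneg_right hzx h).lt_of_ne
      fun h0 => h.ne (hxz0 h0))]
  · rw [h, hzx0 h]
  · rw [sign_pos h, sign_pos ((nonneg_of_mul_nonneg_right hzx h).lt_of_ne
      fun h0 => h.ne' (hxz0 h0.symm))]

theorem IsFace.covec_eq_sign (hF : IsFace e F) (hz : z ∈ intrinsicInterior ℝ F) (i : ι) :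
    covec e F i = SignType.sign ⟪e i, z⟫ := by
  have hsign : ∀ x ∈ intrinsicInterior ℝ F, SignType.sign ⟪e i, x⟫ = SignType.sign ⟪e i, z⟫ :=
    fun x hx => hF.sign_inner_eq hx hz i
  have hpos : (∀ x ∈ intrinsicInterior ℝ F, 0 < ⟪e i, x⟫) ↔ 0 < ⟪e i, z⟫ :=
    ⟨fun h => h z hz, fun h x hx => sign_eq_one_iff.1 ((hsign x hx).trans (sign_pos h))⟩
  have hneg : (∀ x ∈ intrinsicInterior ℝ F, ⟪e i, x⟫ < 0) ↔ ⟪e i, z⟫ < 0 :=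
    ⟨fun h => h z hz, fun h x hx => sign_eq_neg_one_iff.1 ((hsign x hx).trans (sign_neg h))⟩
  simp only [covec, hpos, hneg]
  rcases lt_trichotomy ⟪e i, z⟫ 0 with h | h | h
  · simp [h, h.not_gt]
  · simp [h]
  · simp [h]

theorem IsFace.subset_closedChamber (hF : IsFace e F) (hz : z ∈ intrinsicInterior ℝ F) {p : V}
    (hp : ∀ i, ⟪e i, z⟫ ≠ 0 → 0 < ⟪e i, z⟫ * ⟪e i, p⟫) : F ⊆ closedChamber e p := by
  intro v hv i
  have hzv := hF.inner_mul_inner_nonneg (intrinsicInterior_subset hz) hv i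
  by_cases hzi : ⟪e i, z⟫ = 0
  · simp [hF.inner_eq_zero_of_inner_eq_zero hz hv hzi]
  · have := hp i hzi
    have := mul_self_pos.2 hzi
    nlinarith [mul_nonneg hzv this.le]

end Faces

section FacialIntervals

omit [FiniteDimensional ℝ V] [Fintype ι]

variable {e : ι → V} {B F m M : Set V} {z b : V}

theorem eventually_inner_mul_inner_add_smul_pos [Finite ι] (e : ι → V) (z b : V) :
    ∀ᶠ ε in 𝓝 (0 : ℝ), ∀ i, ⟪e i, z⟫ ≠ 0 → 0 < ⟪e i, z⟫ * ⟪e i, z + ε • b⟫ := by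
  refine eventually_all.2 fun i => ?_
  by_cases hzi : ⟪e i, z⟫ = 0
  · exact .of_forall fun _ h => absurd hzi h
  have hcont : Continuous fun ε : ℝ => ⟪e i, z⟫ * ⟪e i, z + ε • b⟫ := by fun_prop
  have h0 : 0 < ⟪e i, z⟫ * ⟪e i, z + (0 : ℝ) • b⟫ := by simpa using mul_self_pos.2 hzi
  exact (hcont.tendsto 0).eventually (lt_mem_nhds h0) |>.mono fun _ h _ => h

theorem add_smul_mem_arrComplement (hb : ∀ i, ⟪e i, b⟫ ≠ 0) {ε : ℝ} (hε : ε ≠ 0)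
    (hz : ∀ i, ⟪e i, z⟫ ≠ 0 → 0 < ⟪e i, z⟫ * ⟪e i, z + ε • b⟫) :
    z + ε • b ∈ arrComplement e := by
  intro i hi
  by_cases hzi : ⟪e i, z⟫ = 0
  · rw [inner_add_right, real_inner_smul_right, hzi, zero_add] at hi
    exact mul_ne_zero hε (hb i) hi
  · simpa [hi] using hz i hzi

theorem IsFacialInterval.prle (hF : IsFace e F) (hFI : IsFacialInterval e B F m M) :
    PRle e B m M := by
  obtain ⟨R, hR, hFR⟩ := hF.exists_isRegion_superset
  obtain ⟨hmR, hRM⟩ := (hFI.2.2 R hR).1 hFR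
  exact hmR.trans hRM

theorem IsFacialInterval.subset_left (hF : IsFace e F) (hFI : IsFacialInterval e B F m M) :
    F ⊆ m :=
  (hFI.2.2 m hFI.1).2 ⟨subset_rfl, hFI.prle hF⟩

theorem IsFacialInterval.subset_right (hF : IsFace e F) (hFI : IsFacialInterval e B F m M) :
    F ⊆ M :=
  (hFI.2.2 M hFI.2.1).2 ⟨hFI.prle hF, subset_rfl⟩

theorem IsFacialInterval.mem_sepSet_left_iff [Finite ι] (hF : IsFace e F)
    (hFI : IsFacialInterval e B F m M) (hz : z ∈ intrinsicInterior ℝ F) (hbB : b ∈ B)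
    (hb : ∀ i, 0 < ⟪e i, b⟫) (hBpos : ∀ i, B ⊆ posHalf e i) (i : ι) :
    i ∈ sepSet e B m ↔ ⟪e i, z⟫ < 0 := by
  have hsep : ∀ R, i ∈ sepSet e B R ↔ R ⊆ negHalf e i :=
    fun R => mem_sepSet_iff_subset_negHalf hbB hb hBpos i
  refine ⟨fun hm => ?_, fun hneg =>
    (hsep m).2 (hFI.1.subset_negHalf_of_mem (hFI.subset_left hF (intrinsicInterior_subset hz)) hneg)⟩
  obtain ⟨ε, hzε, hε⟩ := ((eventually_inner_mul_inner_add_smul_pos e z b).filter_mono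
    nhdsWithin_le_nhds |>.and (self_mem_nhdsWithin (s := Set.Ioi 0))).exists
  have hp := add_smul_mem_arrComplement (fun i => (hb i).ne') (ne_of_gt hε) hzε
  have hmp := ((hFI.2.2 _ (isRegion_closedChamber hp)).1 (hF.subset_closedChamber hz hzε)).1
  have hpi : ⟪e i, z + ε • b⟫ ≤ 0 := (hsep _).1 (hmp hm) (self_mem_closedChamber _)
  have hzpi := hzε i
  rw [inner_add_right, real_inner_smul_right] at hpi hzpi
  by_contra! hzi
  rcases hzi.eq_or_lt with h | h
  · linarith [mul_pos hε (hb i)]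
  · nlinarith [hzpi h.ne']

theorem IsFacialInterval.mem_sepSet_right_iff [Finite ι] (hF : IsFace e F)
    (hFI : IsFacialInterval e B F m M) (hz : z ∈ intrinsicInterior ℝ F) (hbB : b ∈ B)
    (hb : ∀ i, 0 < ⟪e i, b⟫) (hBpos : ∀ i, B ⊆ posHalf e i) (i : ι) :
    i ∈ sepSet e B M ↔ ⟪e i, z⟫ ≤ 0 := by
  have hsep : ∀ R, i ∈ sepSet e B R ↔ R ⊆ negHalf e i :=
    fun R => mem_sepSet_iff_subset_negHalf hbB hb hBpos i
  refine ⟨fun hM => (hsep M).1 hM (hFI.subset_right hF (intrinsicInterior_subset hz)),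
    fun hzi => ?_⟩
  obtain ⟨ε, hzε, hε⟩ := ((eventually_inner_mul_inner_add_smul_pos e z b).filter_mono
    nhdsWithin_le_nhds |>.and (self_mem_nhdsWithin (s := Set.Iio 0))).exists
  have hq := add_smul_mem_arrComplement (fun i => (hb i).ne') (ne_of_lt hε) hzε
  have hqM := ((hFI.2.2 _ (isRegion_closedChamber hq)).1 (hF.subset_closedChamber hz hzε)).2
  refine hqM ((hsep _).2 ((isRegion_closedChamber hq).subset_negHalf_of_mem
    (self_mem_closedChamber _) ?_))
  have hzqi := hzε i
  rw [inner_add_right, real_inner_smul_right] at hzqi ⊢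
  rcases hzi.eq_or_lt with h | h
  · linarith [mul_neg_of_neg_of_pos (show ε < 0 from hε) (hb i)]
  · nlinarith [hzqi h.ne]

end FacialIntervals

theorem stmt6_general (e : ι → V) (B : Set V)
    (hB : IsRegion e B) (hBpos : ∀ i, B ⊆ posHalf e i)
    (F mF MF : Set V) (hF : IsFace e F)
    (hFI : IsFacialInterval e B F mF MF) :
    sepSet e B mF = {i | covec e F i = -1} ∧
    sepSet e B MF = {i | covec e F i ≤ 0} ∧
    (∀ i, (covec e F i = -1 ↔ i ∈ sepSet e B mF) ∧
      (covec e F i = 0 ↔ (i ∈ sepSet e B MF ∧ i ∉ sepSet e B mF)) ∧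
      (covec e F i = 1 ↔ i ∉ sepSet e B MF)) := by
  obtain ⟨b, hbB, hb⟩ := hB.exists_mem_forall_inner_pos hBpos
  obtain ⟨z, hz⟩ := hF.nonempty_intrinsicInterior
  have hm : ∀ i, i ∈ sepSet e B mF ↔ covec e F i = -1 := fun i => by
    rw [hFI.mem_sepSet_left_iff hF hz hbB hb hBpos, hF.covec_eq_sign hz, sign_eq_neg_one_iff]
  have hM : ∀ i, i ∈ sepSet e B MF ↔ covec e F i ≤ 0 := fun i => by
    rw [hFI.mem_sepSet_right_iff hF hz hbB hb hBpos, hF.covec_eq_sign hz, sign_nonpos_iff]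
  refine ⟨Set.ext hm, Set.ext hM, fun i => ⟨(hm i).symm, ?_, ?_⟩⟩
  · rw [hm, hM]
    cases covec e F i <;> decide
  · rw [hM]
    cases covec e F i <;> decide

/-- `S(m_F) = {H : F(H) = -}` and `S(M_F) = {H : F(H) ≤ 0}`. -/
theorem stmt6 (e : ι → V) (hne : ∀ i, e i ≠ 0) (B : Set V)
    (hB : IsRegion e B) (hBpos : ∀ i, B ⊆ posHalf e i)
    (F mF MF : Set V) (hF : IsFace e F)
    (hFI : IsFacialInterval e B F mF MF) :
    sepSet e B mF = {i | covec e F i = -1} ∧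
    sepSet e B MF = {i | covec e F i ≤ 0} ∧
    (∀ i, (covec e F i = -1 ↔ i ∈ sepSet e B mF) ∧
      (covec e F i = 0 ↔ (i ∈ sepSet e B MF ∧ i ∉ sepSet e B mF)) ∧
      (covec e F i = 1 ↔ i ∉ sepSet e B MF)) :=
  stmt6_general e B hB hBpos F mF MF hF hFI
end

section
/- If F and G are both faces of the base region B (i.e. F ⊆ B and G ⊆ B), then F ⊇ G if and only if F ≤ G in the facial weak order FW(𝒜,B). Dually, if F and G are both faces of the opposite region −B, then F ⊆ G if and only if F ≤ G in FW(𝒜,B). -/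
open scoped RealInnerProductSpace Pointwise

variable {V : Type*} [NormedAddCommGroup V] [InnerProductSpace ℝ V] [FiniteDimensional ℝ V]
  {ι : Type*} [Fintype ι]

/-!
A region is cut out by the signs of any of its generic points `y`:
`R_y = {f | ∀ i, 0 ≤ ⟪e i, y⟫ * ⟪e i, f⟫}`, so `R_y` and `R_z` are separated exactly by the
hyperplanes with `⟪e i, y⟫ * ⟪e i, z⟫ < 0`. For a face `F ⊆ B` the regions containing `F` are
those separated from `B` only by hyperplanes containing `F`; hence the facial interval of `F` is
`[B, M_F]` with `S(M_F) = {H | F ⊆ H}`, and `G ⊆ F` gives `M_F ≤ M_G`. Conversely, if `F ≤ G`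
then every region `R ⊇ F` satisfies `m_G = B ≤ R ≤ M_F ≤ M_G`, so `R ⊇ G`, and `F` is the
intersection of such regions. Faces of `-B` reduce to this case: `PR(𝒜, -B)` is the dual of
`PR(𝒜, B)`, so `FW(𝒜, -B)` is the dual of `FW(𝒜, B)`.
-/

section

variable {V : Type*} [NormedAddCommGroup V] [InnerProductSpace ℝ V] {ι : Type*} {e : ι → V}
  {y z : V} {F G : Set V}

def regionOf (e : ι → V) (y : V) : Set V := closure (connectedComponentIn (arrComplement e) y)

theorem isRegion_iff {R : Set V} : IsRegion e R ↔ ∃ y ∈ arrComplement e, R = regionOf e y :=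
  Iff.rfl

theorem neg_mem_arrComplement (hy : y ∈ arrComplement e) : -y ∈ arrComplement e := fun i => by
  simpa only [inner_neg_right, neg_ne_zero] using hy i

theorem mem_regionOf_self (hy : y ∈ arrComplement e) : y ∈ regionOf e y :=
  subset_closure (mem_connectedComponentIn hy)

theorem regionOf_eq (hy : y ∈ arrComplement e) :
    regionOf e y = {f | ∀ i, 0 ≤ ⟪e i, y⟫ * ⟪e i, f⟫} := by
  apply Set.Subset.antisymm
  · refine closure_minimal (fun z hz i => ?_) ?_
    · -- `⟪e i, ·⟫` does not vanish on the preconnected component, so it keeps its sign at `y`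
      by_contra hneg
      have hC := isPreconnected_connectedComponentIn (F := arrComplement e) (x := y)
      have hcont := (continuous_const.inner continuous_id : Continuous fun v : V => ⟪e i, v⟫)
      have hsub := connectedComponentIn_subset (arrComplement e) y
      have hyC := mem_connectedComponentIn hy
      rcases mul_neg_iff.1 (not_le.1 hneg) with ⟨hyi, hzi⟩ | ⟨hyi, hzi⟩
      · obtain ⟨w, hw, hw0⟩ := hC.intermediate_value hz hyC hcont.continuousOn ⟨hzi.le, hyi.le⟩
        exact hsub hw i hw0
      · obtain ⟨w, hw, hw0⟩ := hC.intermediate_value hyC hz hcont.continuousOn ⟨hyi.le, hzi.le⟩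
        exact hsub hw i hw0
    · simp only [Set.ofPred_forall]
      exact isClosed_iInter fun i =>
        isClosed_le continuous_const (continuous_const.mul (continuous_const.inner continuous_id))
  · intro f hf
    have hseg : openSegment ℝ f y ⊆ arrComplement e := by
      rintro _ ⟨a, b, ha, hb, hab, rfl⟩ i hi
      have hyi := hy i
      have : ⟪e i, y⟫ * ⟪e i, a • f + b • y⟫ = a * (⟪e i, y⟫ * ⟪e i, f⟫) + b * ⟪e i, y⟫ ^ 2 := by
        simp only [inner_add_right, real_inner_smul_right]; ring
      have : 0 < ⟪e i, y⟫ * ⟪e i, a • f + b • y⟫ := by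
        rw [this]; have := hf i; positivity
      simp [hi] at this
    have hconn : IsPreconnected (insert y (openSegment ℝ f y)) :=
      (convex_openSegment f y).isPreconnected.subset_closure (Set.subset_insert _ _)
        (Set.insert_subset_iff.2 ⟨segment_subset_closure_openSegment (right_mem_segment ℝ f y),
          subset_closure⟩)
    have hsub : insert y (openSegment ℝ f y) ⊆ connectedComponentIn (arrComplement e) y :=
      hconn.subset_connectedComponentIn (Set.mem_insert _ _) (Set.insert_subset_iff.2 ⟨hy, hseg⟩)
    exact closure_mono (hsub.trans' (Set.subset_insert _ _))
      (segment_subset_closure_openSegment (left_mem_segment ℝ f y))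

theorem neg_regionOf (hy : y ∈ arrComplement e) : -regionOf e y = regionOf e (-y) := by
  ext f
  simp only [Set.mem_neg, regionOf_eq hy, regionOf_eq (neg_mem_arrComplement hy),
    Set.mem_ofPred_eq, inner_neg_right, mul_neg, neg_mul]

theorem regionOf_subset_posHalf_iff (hy : y ∈ arrComplement e) (i : ι) :
    regionOf e y ⊆ posHalf e i ↔ 0 < ⟪e i, y⟫ := by
  refine ⟨fun h => (h (mem_regionOf_self hy)).lt_of_ne' (hy i), fun hyi f hf => ?_⟩
  rw [regionOf_eq hy] at hf
  exact nonneg_of_mul_nonneg_right (hf i) hyi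

theorem regionOf_subset_negHalf_iff (hy : y ∈ arrComplement e) (i : ι) :
    regionOf e y ⊆ negHalf e i ↔ ⟪e i, y⟫ < 0 := by
  refine ⟨fun h => (h (mem_regionOf_self hy)).lt_of_ne (hy i), fun hyi f hf => ?_⟩
  rw [regionOf_eq hy] at hf
  exact nonpos_of_mul_nonneg_right (hf i) hyi

theorem mem_sepSet_regionOf_iff (hy : y ∈ arrComplement e) (hz : z ∈ arrComplement e) (i : ι) :
    i ∈ sepSet e (regionOf e y) (regionOf e z) ↔ ⟪e i, y⟫ * ⟪e i, z⟫ < 0 := by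
  simp only [sepSet, Set.mem_ofPred_eq, regionOf_subset_posHalf_iff hy,
    regionOf_subset_posHalf_iff hz, regionOf_subset_negHalf_iff hy, regionOf_subset_negHalf_iff hz,
    mul_neg_iff]

theorem PRle.trans {B R R' R'' : Set V} (h : PRle e B R R') (h' : PRle e B R' R'') :
    PRle e B R R'' :=
  Set.Subset.trans h h'

theorem PRle_regionOf_self (hy : y ∈ arrComplement e) {R : Set V} (hR : IsRegion e R) :
    PRle e (regionOf e y) (regionOf e y) R := by
  obtain ⟨z, hz, rfl⟩ := isRegion_iff.1 hR
  intro i hi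
  rw [mem_sepSet_regionOf_iff hy hy] at hi
  exact absurd hi (not_lt.2 (mul_self_nonneg _))

theorem PRle.neg (hy : y ∈ arrComplement e) {R R' : Set V} (hR : IsRegion e R)
    (hR' : IsRegion e R') (h : PRle e (regionOf e y) R R') : PRle e (regionOf e (-y)) R' R := by
  obtain ⟨z, hz, rfl⟩ := isRegion_iff.1 hR
  obtain ⟨z', hz', rfl⟩ := isRegion_iff.1 hR'
  have hy' := neg_mem_arrComplement hy
  intro i hi
  rw [mem_sepSet_regionOf_iff hy' hz, inner_neg_right, neg_mul, neg_lt_zero]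
  rw [mem_sepSet_regionOf_iff hy' hz', inner_neg_right, neg_mul, neg_lt_zero] at hi
  refine (lt_or_gt_of_ne (mul_ne_zero (hy i) (hz i))).resolve_left fun hzi => ?_
  have := (mem_sepSet_regionOf_iff hy hz' i).1 (h ((mem_sepSet_regionOf_iff hy hz i).2 hzi))
  linarith

theorem IsFacialInterval.neg (hy : y ∈ arrComplement e) {m M : Set V}
    (h : IsFacialInterval e (regionOf e y) F m M) : IsFacialInterval e (regionOf e (-y)) F M m := by
  obtain ⟨hm, hM, h⟩ := h
  refine ⟨hM, hm, fun R hR =>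
    (h R hR).trans ⟨fun ⟨hmR, hRM⟩ => ⟨?_, ?_⟩, fun ⟨hMR, hRm⟩ => ⟨?_, ?_⟩⟩⟩
  · exact PRle.neg hy hR hM hRM
  · exact PRle.neg hy hm hR hmR
  · simpa using PRle.neg (neg_mem_arrComplement hy) hR hm hRm
  · simpa using PRle.neg (neg_mem_arrComplement hy) hM hR hMR

theorem FWle.neg (hy : y ∈ arrComplement e) (h : FWle e (regionOf e y) F G) :
    FWle e (regionOf e (-y)) G F := by
  obtain ⟨mF, MF, mG, MG, hF, hG, hm, hM⟩ := h
  exact ⟨MG, mG, MF, mF, IsFacialInterval.neg hy hG, IsFacialInterval.neg hy hF,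
    PRle.neg hy hF.2.1 hG.2.1 hM, PRle.neg hy hF.1 hG.1 hm⟩

theorem FWle_neg_iff (hy : y ∈ arrComplement e) :
    FWle e (regionOf e (-y)) G F ↔ FWle e (regionOf e y) F G :=
  ⟨fun h => by simpa using FWle.neg (neg_mem_arrComplement hy) h, FWle.neg hy⟩

theorem IsFace.subset_of_forall_region (hF : IsFace e F)
    (h : ∀ R, IsRegion e R → F ⊆ R → G ⊆ R) : G ⊆ F := by
  obtain ⟨Rs, -, hRs, rfl⟩ := hF
  exact Set.subset_sInter_iff.2 fun R hR => h R (hRs R hR) (Set.sInter_subset_of_mem hR)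

theorem subset_regionOf_iff (hy : y ∈ arrComplement e) (hz : z ∈ arrComplement e)
    (hF : F ⊆ regionOf e y) :
    F ⊆ regionOf e z ↔ ∀ i, ⟪e i, y⟫ * ⟪e i, z⟫ < 0 → ∀ f ∈ F, ⟪e i, f⟫ = 0 := by
  rw [regionOf_eq hy] at hF
  rw [regionOf_eq hz]
  refine ⟨fun h i hyz f hf => ?_, fun h f hf i => ?_⟩
  · have hyf := hF hf i
    have hzf := h hf i
    by_contra hfi
    nlinarith [mul_nonneg hyf hzf, mul_neg_of_neg_of_pos hyz (sq_pos_of_ne_zero hfi)]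
  · by_cases hyz : ⟪e i, y⟫ * ⟪e i, z⟫ < 0
    · simp [h i hyz f hf]
    · have hyz : 0 < ⟪e i, y⟫ * ⟪e i, z⟫ :=
        (not_lt.1 hyz).lt_of_ne (mul_ne_zero (hy i) (hz i)).symm
      have hyf := hF hf i
      have hyi := sq_pos_of_ne_zero (hy i)
      nlinarith [mul_nonneg hyz.le hyf]

section Finite

variable [Fintype ι]

/-- Sum, over the hyperplanes not containing `F`, a point of `F` off that hyperplane. -/
theorem exists_inner_mul_eq_zero_iff (hy : y ∈ arrComplement e) (hF : F ⊆ regionOf e y) :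
    ∃ x, ∀ i, 0 ≤ ⟪e i, y⟫ * ⟪e i, x⟫ ∧ (⟪e i, y⟫ * ⟪e i, x⟫ = 0 ↔ ∀ f ∈ F, ⟪e i, f⟫ = 0) := by
  rw [regionOf_eq hy] at hF
  have hw : ∀ j, ∃ w, (w = 0 ∨ w ∈ F) ∧ ((∃ f ∈ F, ⟪e j, f⟫ ≠ 0) → ⟪e j, w⟫ ≠ 0) := by
    intro j
    by_cases h : ∃ f ∈ F, ⟪e j, f⟫ ≠ 0
    · obtain ⟨f, hf, hfj⟩ := h
      exact ⟨f, Or.inr hf, fun _ => hfj⟩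
    · exact ⟨0, Or.inl rfl, fun h' => absurd h' h⟩
  choose w hwF hwne using hw
  have hterm : ∀ i j, 0 ≤ ⟪e i, y⟫ * ⟪e i, w j⟫ := fun i j => by
    rcases hwF j with h | h
    · simp [h]
    · exact hF h i
  refine ⟨∑ j, w j, fun i => ?_⟩
  rw [inner_sum, Finset.mul_sum]
  refine ⟨Finset.sum_nonneg fun j _ => hterm i j, ⟨fun h => ?_, fun h => ?_⟩⟩
  · have hi := (Finset.sum_eq_zero_iff_of_nonneg fun j _ => hterm i j).1 h i (Finset.mem_univ i)
    by_contra hne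
    push Not at hne
    exact mul_ne_zero (hy i) (hwne i hne) hi
  · refine Finset.sum_eq_zero fun j _ => ?_
    rcases hwF j with hj | hj
    · simp [hj]
    · simp [h _ hj]

/-- Take `c • x - y` for large `c`, with `x` from `exists_inner_mul_eq_zero_iff`. -/
theorem exists_inner_mul_neg_iff (hy : y ∈ arrComplement e) (hF : F ⊆ regionOf e y) :
    ∃ v ∈ arrComplement e, ∀ i, ⟪e i, y⟫ * ⟪e i, v⟫ < 0 ↔ ∀ f ∈ F, ⟪e i, f⟫ = 0 := by
  obtain ⟨x, hx⟩ := exists_inner_mul_eq_zero_iff hy hF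
  have hc : ∀ᶠ c : ℝ in Filter.atTop, ∀ i, 0 < ⟪e i, y⟫ * ⟪e i, x⟫ →
      ⟪e i, y⟫ ^ 2 < c * (⟪e i, y⟫ * ⟪e i, x⟫) := by
    refine Filter.eventually_all.2 fun i => ?_
    by_cases hi : 0 < ⟪e i, y⟫ * ⟪e i, x⟫
    · filter_upwards [(Filter.tendsto_id.atTop_mul_const hi).eventually_gt_atTop (⟪e i, y⟫ ^ 2)]
        with c hc _ using hc
    · exact Filter.Eventually.of_forall fun _ h => absurd h hi
  obtain ⟨c, hc⟩ := hc.exists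
  have hv : ∀ i, ⟪e i, y⟫ * ⟪e i, c • x - y⟫ = c * (⟪e i, y⟫ * ⟪e i, x⟫) - ⟪e i, y⟫ ^ 2 := by
    intro i
    rw [inner_sub_right, real_inner_smul_right]
    ring
  have hsign : ∀ i, (⟪e i, y⟫ * ⟪e i, x⟫ = 0 → ⟪e i, y⟫ * ⟪e i, c • x - y⟫ < 0) ∧
      (⟪e i, y⟫ * ⟪e i, x⟫ ≠ 0 → 0 < ⟪e i, y⟫ * ⟪e i, c • x - y⟫) := by
    intro i
    have hyi := sq_pos_of_ne_zero (hy i)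
    rw [hv]
    exact ⟨fun h => by rw [h]; linarith,
      fun h => by linarith [hc i (lt_of_le_of_ne (hx i).1 (Ne.symm h))]⟩
  refine ⟨c • x - y, fun i => ?_, fun i => ?_⟩
  · by_cases h : ⟪e i, y⟫ * ⟪e i, x⟫ = 0
    · exact right_ne_zero_of_mul ((hsign i).1 h).ne
    · exact right_ne_zero_of_mul ((hsign i).2 h).ne'
  · rw [← (hx i).2]
    exact ⟨fun hlt => by_contra fun h => ((hsign i).2 h).not_gt hlt, (hsign i).1⟩

theorem exists_isFacialInterval_regionOf (hy : y ∈ arrComplement e) (hF : F ⊆ regionOf e y) :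
    ∃ M, IsFacialInterval e (regionOf e y) F (regionOf e y) M ∧
      sepSet e (regionOf e y) M = {i | ∀ f ∈ F, ⟪e i, f⟫ = 0} := by
  obtain ⟨v, hv, hsign⟩ := exists_inner_mul_neg_iff hy hF
  have hsep : sepSet e (regionOf e y) (regionOf e v) = {i | ∀ f ∈ F, ⟪e i, f⟫ = 0} := by
    ext i
    rw [mem_sepSet_regionOf_iff hy hv, hsign]
    rfl
  refine ⟨regionOf e v, ⟨⟨y, hy, rfl⟩, ⟨v, hv, rfl⟩, fun R hR => ?_⟩, hsep⟩
  obtain ⟨z, hz, rfl⟩ := isRegion_iff.1 hR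
  rw [subset_regionOf_iff hy hz hF]
  unfold PRle
  rw [hsep]
  refine ⟨fun h => ⟨PRle_regionOf_self hy hR, fun i hi => h i ?_⟩, fun ⟨_, h⟩ i hi => h ?_⟩
  · rwa [mem_sepSet_regionOf_iff hy hz] at hi
  · rwa [mem_sepSet_regionOf_iff hy hz]

theorem FWle_of_subset (hy : y ∈ arrComplement e) (hFB : F ⊆ regionOf e y) (hGF : G ⊆ F) :
    FWle e (regionOf e y) F G := by
  obtain ⟨MF, hF, hsepF⟩ := exists_isFacialInterval_regionOf hy hFB
  obtain ⟨MG, hG, hsepG⟩ := exists_isFacialInterval_regionOf hy (hGF.trans hFB)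
  refine ⟨_, MF, _, MG, hF, hG, subset_rfl, ?_⟩
  rw [PRle, hsepF, hsepG]
  exact fun i hi f hf => hi f (hGF hf)

end Finite

theorem IsFace.subset_of_FWle (hF : IsFace e F) (hy : y ∈ arrComplement e)
    (hGB : G ⊆ regionOf e y) (h : FWle e (regionOf e y) F G) : G ⊆ F := by
  obtain ⟨mF, MF, mG, MG, hIF, hIG, -, hM⟩ := h
  refine hF.subset_of_forall_region fun R hR hFR => (hIG.2.2 R hR).2 ⟨?_, ?_⟩
  · exact PRle.trans ((hIG.2.2 _ ⟨y, hy, rfl⟩).1 hGB).1 (PRle_regionOf_self hy hR)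
  · exact PRle.trans ((hIF.2.2 R hR).1 hFR).2 hM

theorem subset_iff_FWle [Fintype ι] (hy : y ∈ arrComplement e) (hF : IsFace e F)
    (hFB : F ⊆ regionOf e y) (hGB : G ⊆ regionOf e y) : G ⊆ F ↔ FWle e (regionOf e y) F G :=
  ⟨FWle_of_subset hy hFB, hF.subset_of_FWle hy hGB⟩

end

theorem stmt11_general (e : ι → V) (B : Set V) (hB : IsRegion e B) :
    (∀ F G, IsFace e F → IsFace e G → F ⊆ B → G ⊆ B → (G ⊆ F ↔ FWle e B F G)) ∧
    (∀ F G, IsFace e F → IsFace e G → F ⊆ -B → G ⊆ -B → (F ⊆ G ↔ FWle e B F G)) := by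
  obtain ⟨y, hy, rfl⟩ := isRegion_iff.1 hB
  refine ⟨fun F G hF _ hFB hGB => subset_iff_FWle hy hF hFB hGB, fun F G _ hG hFB hGB => ?_⟩
  rw [neg_regionOf hy] at hFB hGB
  rw [← FWle_neg_iff hy]
  exact subset_iff_FWle (neg_mem_arrComplement hy) hG hGB hFB

/-- For faces of the base region `B`, reverse containment agrees with the facial weak
order; for faces of `-B`, containment agrees with the facial weak order. -/
theorem stmt11 (e : ι → V) (hne : ∀ i, e i ≠ 0) (B : Set V)
    (hB : IsRegion e B) (hBpos : ∀ i, B ⊆ posHalf e i) :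
    (∀ F G, IsFace e F → IsFace e G → F ⊆ B → G ⊆ B → (G ⊆ F ↔ FWle e B F G)) ∧
    (∀ F G, IsFace e F → IsFace e G → F ⊆ -B → G ⊆ -B → (F ⊆ G ↔ FWle e B F G)) :=
  stmt11_general e B hB
end
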